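/- arXiv:2305.16052 — 8 statements merged into one kernel-verified Lean document; each statement's English description precedes it below -/
import Mathlib

section
/- Let γ ∈ (−1, 1), β ∈ (0, 1], a ∈ (0, 1), b > 0, and dataset sizes n₁, n₂ > 0. Let c_i = a + b n_i^{−β}, c_share = a + b (n₁+n₂)^{−β}, and define the two-firm Cournot profits Π_{i,ind} = ((2 − γ − 2c_i + γ c_{−i})/(4 − γ²))² and Π_share = ((2 − γ)(1 − c_share)/(4 − γ²))². Assume 2 − γ − 2c_i + γ c_{−i} > 0 for both i and (2 − γ)(1 − c_share) > 0. Then for each firm i ∈ {1, 2}: Π_share > Π_{i,ind} if and only if (2 − γ)(n_i^{−β} − (n₁+n₂)^{−β}) > γ (n_{−i}^{−β} − n_i^{−β}), where −i denotes the other firm. -/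
/-!
Both profits are squares over the common denominator `(4 - γ²)²` of positive equilibrium
margins, so firm `i` gains from sharing iff its margin grows. With `cᵢ = a + b xᵢ`, the
intercept `a` cancels from the difference of margins, which is `b` times
`(2 - γ)(xᵢ - s) - γ (xⱼ - xᵢ)`, where `xᵢ = nᵢ^(-β)` and `s = (n₁ + n₂)^(-β)`.
-/

theorem sq_div_lt_sq_div_iff_of_nonneg {u v d : ℝ} (hu : 0 ≤ u) (hv : 0 ≤ v) (hd : d ≠ 0) :
    (u / d) ^ 2 < (v / d) ^ 2 ↔ u < v := by
  rw [div_pow, div_pow, div_lt_div_iff_of_pos_right (by positivity),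
    pow_lt_pow_iff_left₀ hu hv two_ne_zero]

namespace Cournot

theorem shared_margin_sub_margin (γ a b xᵢ xⱼ s : ℝ) :
    (2 - γ) * (1 - (a + b * s)) - (2 - γ - 2 * (a + b * xᵢ) + γ * (a + b * xⱼ)) =
      b * ((2 - γ) * (xᵢ - s) - γ * (xⱼ - xᵢ)) := by
  ring

theorem sharing_profitable_iff {γ a b xᵢ xⱼ s : ℝ} (hd : 4 - γ ^ 2 ≠ 0) (hb : 0 < b)
    (hpos : 0 < 2 - γ - 2 * (a + b * xᵢ) + γ * (a + b * xⱼ))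
    (hposs : 0 < (2 - γ) * (1 - (a + b * s))) :
    ((2 - γ) * (1 - (a + b * s)) / (4 - γ ^ 2)) ^ 2 >
        ((2 - γ - 2 * (a + b * xᵢ) + γ * (a + b * xⱼ)) / (4 - γ ^ 2)) ^ 2 ↔
      (2 - γ) * (xᵢ - s) > γ * (xⱼ - xᵢ) := by
  rw [gt_iff_lt, sq_div_lt_sq_div_iff_of_nonneg hpos.le hposs.le hd, ← sub_pos,
    shared_margin_sub_margin, mul_pos_iff_of_pos_left hb, sub_pos]

end Cournot

theorem cournot_sharing_criterion_general
    (γ β a b n₁ n₂ : ℝ)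
    (hγ₁ : -1 < γ) (hγ₂ : γ < 1)
    (hb : 0 < b)
    (c₁ c₂ cs : ℝ)
    (hc₁ : c₁ = a + b * n₁ ^ (-β)) (hc₂ : c₂ = a + b * n₂ ^ (-β))
    (hcs : cs = a + b * (n₁ + n₂) ^ (-β))
    (hpos₁ : 0 < 2 - γ - 2 * c₁ + γ * c₂)
    (hpos₂ : 0 < 2 - γ - 2 * c₂ + γ * c₁)
    (hposs : 0 < (2 - γ) * (1 - cs)) :
    (((2 - γ) * (1 - cs) / (4 - γ ^ 2)) ^ 2 > ((2 - γ - 2 * c₁ + γ * c₂) / (4 - γ ^ 2)) ^ 2 ↔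
      (2 - γ) * (n₁ ^ (-β) - (n₁ + n₂) ^ (-β)) > γ * (n₂ ^ (-β) - n₁ ^ (-β))) ∧
    (((2 - γ) * (1 - cs) / (4 - γ ^ 2)) ^ 2 > ((2 - γ - 2 * c₂ + γ * c₁) / (4 - γ ^ 2)) ^ 2 ↔
      (2 - γ) * (n₂ ^ (-β) - (n₁ + n₂) ^ (-β)) > γ * (n₁ ^ (-β) - n₂ ^ (-β))) := by
  have hd : 4 - γ ^ 2 ≠ 0 := by nlinarith
  subst hc₁ hc₂ hcs
  exact ⟨Cournot.sharing_profitable_iff hd hb hpos₁ hposs,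
    Cournot.sharing_profitable_iff hd hb hpos₂ hposs⟩

/-- **Cournot full-data-sharing criterion (two firms).** With substitutability
`γ ∈ (-1, 1)`, learning difficulty `β ∈ (0, 1]`, cost parameters `a ∈ (0,1)`, `b > 0`,
data sizes `n₁, n₂ > 0`, individual costs `c_i = a + b n_i^{-β}`, shared cost
`c_share = a + b (n₁+n₂)^{-β}`, Cournot profits `Π_{i,ind} = ((2-γ-2c_i+γc_{-i})/(4-γ²))²`
and `Π_share = ((2-γ)(1-c_share)/(4-γ²))²`, assuming the bracketed terms are positive,
for each firm `i`: `Π_share > Π_{i,ind}` iff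
`(2-γ)(n_i^{-β} - (n₁+n₂)^{-β}) > γ (n_{-i}^{-β} - n_i^{-β})`. -/
theorem cournot_sharing_criterion
    (γ β a b n₁ n₂ : ℝ)
    (hγ₁ : -1 < γ) (hγ₂ : γ < 1) (hβ₁ : 0 < β) (hβ₂ : β ≤ 1)
    (ha₁ : 0 < a) (ha₂ : a < 1) (hb : 0 < b) (hn₁ : 0 < n₁) (hn₂ : 0 < n₂)
    (c₁ c₂ cs : ℝ)
    (hc₁ : c₁ = a + b * n₁ ^ (-β)) (hc₂ : c₂ = a + b * n₂ ^ (-β))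
    (hcs : cs = a + b * (n₁ + n₂) ^ (-β))
    (hpos₁ : 0 < 2 - γ - 2 * c₁ + γ * c₂)
    (hpos₂ : 0 < 2 - γ - 2 * c₂ + γ * c₁)
    (hposs : 0 < (2 - γ) * (1 - cs)) :
    (((2 - γ) * (1 - cs) / (4 - γ ^ 2)) ^ 2 > ((2 - γ - 2 * c₁ + γ * c₂) / (4 - γ ^ 2)) ^ 2 ↔
      (2 - γ) * (n₁ ^ (-β) - (n₁ + n₂) ^ (-β)) > γ * (n₂ ^ (-β) - n₁ ^ (-β))) ∧
    (((2 - γ) * (1 - cs) / (4 - γ ^ 2)) ^ 2 > ((2 - γ - 2 * c₂ + γ * c₁) / (4 - γ ^ 2)) ^ 2 ↔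
      (2 - γ) * (n₂ ^ (-β) - (n₁ + n₂) ^ (-β)) > γ * (n₁ ^ (-β) - n₂ ^ (-β))) :=
  cournot_sharing_criterion_general γ β a b n₁ n₂ hγ₁ hγ₂ hb c₁ c₂ cs hc₁ hc₂ hcs hpos₁ hpos₂ hposs
end

section
/- Let γ ∈ (−1, 0], β ∈ (0, 1], and n₁, n₂ > 0. Then for each i ∈ {1, 2}, the collaboration criterion (2 − γ)(n_i^{−β} − (n₁+n₂)^{−β}) > γ (n_{−i}^{−β} − n_i^{−β}) holds, where −i denotes the other index. In particular, when the goods are complements or independent (γ ≤ 0), full data sharing is profitable for both firms in the Cournot duopoly. -/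
/-- **Complements or independent goods imply collaboration.** For `γ ∈ (-1, 0]`,
`β ∈ (0, 1]`, and `n₁, n₂ > 0`, the collaboration criterion
`(2-γ)(n_i^{-β} - (n₁+n₂)^{-β}) > γ (n_{-i}^{-β} - n_i^{-β})` holds for both firms
`i ∈ {1, 2}`; hence full data sharing is profitable for both firms in the Cournot
duopoly when the goods are complements or independent. -/
theorem complements_always_collaborate
    (γ β n₁ n₂ : ℝ)
    (hγ₁ : -1 < γ) (hγ₂ : γ ≤ 0)
    (hβ₁ : 0 < β) (hβ₂ : β ≤ 1) (hn₁ : 0 < n₁) (hn₂ : 0 < n₂) :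
    ((2 - γ) * (n₁ ^ (-β) - (n₁ + n₂) ^ (-β)) > γ * (n₂ ^ (-β) - n₁ ^ (-β))) ∧
    ((2 - γ) * (n₂ ^ (-β) - (n₁ + n₂) ^ (-β)) > γ * (n₁ ^ (-β) - n₂ ^ (-β))) := by
  have hneg : -β < 0 := by linarith
  have h1 : (n₁ + n₂) ^ (-β) < n₁ ^ (-β) :=
    Real.rpow_lt_rpow_of_neg hn₁ (by linarith) hneg
  have h2 : (n₁ + n₂) ^ (-β) < n₂ ^ (-β) :=
    Real.rpow_lt_rpow_of_neg hn₂ (by linarith) hneg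
  constructor <;> nlinarith [h1, h2]
end

section
/- Fix γ ∈ (0, 1) and β ∈ (0, 1], and define f_Cournot(x) = 2x^β − γ(1−x)^β − (2−γ) x^β (1−x)^β for x ∈ [0, 1]. Then f_Cournot is strictly increasing on [0, 1], f_Cournot(0) < 0 and f_Cournot(1) > 0, so there is a unique x_C(γ, β) ∈ (0, 1) with f_Cournot(x_C) = 0; moreover for any n₁, n₂ > 0 and i ∈ {1, 2}, the criterion (2 − γ)(n_i^{−β} − (n₁+n₂)^{−β}) > γ (n_{−i}^{−β} − n_i^{−β}) holds if and only if n_{−i}/(n₁+n₂) > x_C(γ, β). -/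
/-- The Cournot collaboration criterion function
`f_Cournot(x) = 2x^β - γ(1-x)^β - (2-γ) x^β (1-x)^β`. -/
noncomputable def fCournot (γ β x : ℝ) : ℝ :=
  2 * x ^ β - γ * (1 - x) ^ β - (2 - γ) * x ^ β * (1 - x) ^ β

/-!
Writing `u = x ^ β` and `v = (1 - x) ^ β`, `f_Cournot` is the bilinear form
`2u - γv - (2-γ)uv`, which for `u, v ∈ [0,1]` is increasing in `u` and decreasing in `v`;
as `x` grows, `u` grows and `v` shrinks, so `f_Cournot` is strictly increasing, from
`f_Cournot 0 = -γ` to `f_Cournot 1 = 2`, and its root `x_C` comes from the intermediate value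
theorem. Putting `x = n₂ / (n₁ + n₂)`, the difference of the two sides of the sharing criterion
equals `f_Cournot x · (n₁ n₂ / (n₁ + n₂))^(-β)`, so the criterion holds exactly when
`f_Cournot x > 0`, i.e. when `x > x_C`.
-/

open Set

section
variable {γ β : ℝ}

theorem fCournot_zero (hβ : β ≠ 0) : fCournot γ β 0 = -γ := by
  simp only [fCournot, sub_zero, Real.zero_rpow hβ, Real.one_rpow]
  ring

theorem fCournot_one (hβ : β ≠ 0) : fCournot γ β 1 = 2 := by
  simp only [fCournot, sub_self, Real.zero_rpow hβ, Real.one_rpow]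
  ring

theorem continuous_fCournot (hβ : 0 ≤ β) : Continuous (fCournot γ β) := by
  have hpow := Real.continuous_rpow_const hβ
  unfold fCournot
  fun_prop

theorem fCournot_strictMonoOn (hγ : 0 < γ) (hβ : 0 < β) :
    StrictMonoOn (fCournot γ β) (Icc 0 1) := by
  rintro a ⟨ha₀, ha₁⟩ b ⟨hb₀, hb₁⟩ hab
  have hu : a ^ β < b ^ β := Real.rpow_lt_rpow ha₀ hab hβ
  have hv : (1 - b) ^ β < (1 - a) ^ β := Real.rpow_lt_rpow (by linarith) (by linarith) hβ
  have ha_nonneg : 0 ≤ a ^ β := Real.rpow_nonneg ha₀ β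
  have hb_le_one : b ^ β ≤ 1 := Real.rpow_le_one hb₀ hb₁ hβ.le
  have hb_nonneg : 0 ≤ (1 - b) ^ β := Real.rpow_nonneg (by linarith) β
  have ha_le_one : (1 - a) ^ β ≤ 1 := Real.rpow_le_one (by linarith) (by linarith) hβ.le
  -- `f b - f a` is the sum of these two products.
  have hgain_u : 0 < (b ^ β - a ^ β) * (2 - (2 - γ) * (1 - a) ^ β) :=
    mul_pos (by linarith) (by nlinarith)
  have hgain_v : 0 < ((1 - a) ^ β - (1 - b) ^ β) * (γ + (2 - γ) * b ^ β) :=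
    mul_pos (by linarith) (by nlinarith)
  simp only [fCournot]
  nlinarith

theorem sharing_gain_eq_fCournot_mul {n₁ n₂ : ℝ} (h₁ : 0 < n₁) (h₂ : 0 < n₂) :
    (2 - γ) * (n₁ ^ (-β) - (n₁ + n₂) ^ (-β)) - γ * (n₂ ^ (-β) - n₁ ^ (-β)) =
      fCournot γ β (n₂ / (n₁ + n₂)) * (n₁ * n₂ / (n₁ + n₂)) ^ (-β) := by
  have hs : 0 < n₁ + n₂ := add_pos h₁ h₂
  set s := n₁ + n₂
  have hcompl : 1 - n₂ / s = n₁ / s := by field_simp; ring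
  have hscale : ∀ m : ℝ, 0 ≤ m → m ^ β = (m / s) ^ β * s ^ β := fun m hm => by
    rw [← Real.mul_rpow (by positivity) hs.le, div_mul_cancel₀ m hs.ne']
  have hprod : n₁ * n₂ / s = n₁ / s * (n₂ / s) * s := by field_simp
  rw [fCournot, hcompl, Real.rpow_neg h₁.le, Real.rpow_neg h₂.le, Real.rpow_neg hs.le,
    Real.rpow_neg (by positivity), hprod, Real.mul_rpow (by positivity) hs.le,
    Real.mul_rpow (by positivity) (by positivity), hscale n₁ h₁.le, hscale n₂ h₂.le]
  field_simp
  ring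

theorem sharing_gain_pos_iff {n₁ n₂ : ℝ} (h₁ : 0 < n₁) (h₂ : 0 < n₂) :
    γ * (n₂ ^ (-β) - n₁ ^ (-β)) < (2 - γ) * (n₁ ^ (-β) - (n₁ + n₂) ^ (-β)) ↔
      0 < fCournot γ β (n₂ / (n₁ + n₂)) := by
  rw [← sub_pos, sharing_gain_eq_fCournot_mul h₁ h₂,
    mul_pos_iff_of_pos_right (by positivity)]

end

theorem div_add_mem_Ioo {a b : ℝ} (ha : 0 < a) (hb : 0 < b) : b / (a + b) ∈ Ioo 0 1 :=
  ⟨by positivity, (div_lt_one (by positivity)).2 (by linarith)⟩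

theorem cournot_threshold_general
    (γ β : ℝ) (hγ₁ : 0 < γ) (hβ₁ : 0 < β) :
    StrictMonoOn (fCournot γ β) (Set.Icc 0 1) ∧
    fCournot γ β 0 < 0 ∧ 0 < fCournot γ β 1 ∧
    ∃ xC ∈ Set.Ioo (0 : ℝ) 1, fCournot γ β xC = 0 ∧
      (∀ y ∈ Set.Ioo (0 : ℝ) 1, fCournot γ β y = 0 → y = xC) ∧
      ∀ n₁ n₂ : ℝ, 0 < n₁ → 0 < n₂ →
        (((2 - γ) * (n₁ ^ (-β) - (n₁ + n₂) ^ (-β)) > γ * (n₂ ^ (-β) - n₁ ^ (-β))) ↔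
          n₂ / (n₁ + n₂) > xC) ∧
        (((2 - γ) * (n₂ ^ (-β) - (n₁ + n₂) ^ (-β)) > γ * (n₁ ^ (-β) - n₂ ^ (-β))) ↔
          n₁ / (n₁ + n₂) > xC) := by
  have hmono := fCournot_strictMonoOn hγ₁ hβ₁
  have hf₀ : fCournot γ β 0 < 0 := by rw [fCournot_zero hβ₁.ne']; linarith
  have hf₁ : 0 < fCournot γ β 1 := by rw [fCournot_one hβ₁.ne']; norm_num
  obtain ⟨xC, hxC, hroot⟩ :=
    intermediate_value_Ioo zero_le_one (continuous_fCournot hβ₁.le).continuousOn ⟨hf₀, hf₁⟩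
  have hpos_iff : ∀ x ∈ Ioo (0 : ℝ) 1, 0 < fCournot γ β x ↔ xC < x := fun x hx => by
    simpa only [hroot] using
      hmono.lt_iff_lt (Ioo_subset_Icc_self hxC) (Ioo_subset_Icc_self hx)
  refine ⟨hmono, hf₀, hf₁, xC, hxC, hroot, fun y hy hy_root => ?_, fun n₁ n₂ h₁ h₂ => ⟨?_, ?_⟩⟩
  · exact hmono.injOn (Ioo_subset_Icc_self hy) (Ioo_subset_Icc_self hxC) (hy_root.trans hroot.symm)
  · exact (sharing_gain_pos_iff h₁ h₂).trans (hpos_iff _ (div_add_mem_Ioo h₁ h₂))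
  · rw [add_comm n₁ n₂]
    exact (sharing_gain_pos_iff h₂ h₁).trans (hpos_iff _ (div_add_mem_Ioo h₂ h₁))

/-- **Existence and characterization of the Cournot data-sharing threshold.** For
`γ ∈ (0,1)` and `β ∈ (0,1]`, `f_Cournot` is strictly increasing on `[0,1]`, negative at
`0` and positive at `1`, so it has a unique root `x_C ∈ (0,1)`; moreover for any
`n₁, n₂ > 0` and each firm `i ∈ {1,2}`, the criterion
`(2-γ)(n_i^{-β} - (n₁+n₂)^{-β}) > γ (n_{-i}^{-β} - n_i^{-β})` holds iff
`n_{-i}/(n₁+n₂) > x_C`. -/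
theorem cournot_threshold
    (γ β : ℝ) (hγ₁ : 0 < γ) (hγ₂ : γ < 1) (hβ₁ : 0 < β) (hβ₂ : β ≤ 1) :
    StrictMonoOn (fCournot γ β) (Set.Icc 0 1) ∧
    fCournot γ β 0 < 0 ∧ 0 < fCournot γ β 1 ∧
    ∃ xC ∈ Set.Ioo (0 : ℝ) 1, fCournot γ β xC = 0 ∧
      (∀ y ∈ Set.Ioo (0 : ℝ) 1, fCournot γ β y = 0 → y = xC) ∧
      ∀ n₁ n₂ : ℝ, 0 < n₁ → 0 < n₂ →
        (((2 - γ) * (n₁ ^ (-β) - (n₁ + n₂) ^ (-β)) > γ * (n₂ ^ (-β) - n₁ ^ (-β))) ↔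
          n₂ / (n₁ + n₂) > xC) ∧
        (((2 - γ) * (n₂ ^ (-β) - (n₁ + n₂) ^ (-β)) > γ * (n₁ ^ (-β) - n₂ ^ (-β))) ↔
          n₁ / (n₁ + n₂) > xC) :=
  cournot_threshold_general γ β hγ₁ hβ₁
end

section
/- For β ∈ (0, 1] and γ ∈ (0, 1), let x_C(γ, β) denote the unique root in (0, 1) of f_Cournot(x, γ, β) = 2x^β − γ(1−x)^β − (2−γ) x^β (1−x)^β. Then x_C(γ, β) is strictly increasing in γ on (0, 1): for 0 < γ < γ' < 1, x_C(γ, β) < x_C(γ', β). -/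
/-- **The Cournot threshold is strictly increasing in `γ` (Theorem 1, property 1).**
For fixed `β ∈ (0,1]` and `0 < γ < γ' < 1`, if `x` and `x'` are the roots in `(0,1)` of
`f_Cournot(·, γ, β)` and `f_Cournot(·, γ', β)` respectively, then `x < x'`. -/
theorem cournot_threshold_increasing_in_gamma
    (β γ γ' x x' : ℝ) (hβ₁ : 0 < β) (hβ₂ : β ≤ 1)
    (hγ : 0 < γ) (hγγ' : γ < γ') (hγ' : γ' < 1)
    (hx : x ∈ Set.Ioo (0 : ℝ) 1) (hx' : x' ∈ Set.Ioo (0 : ℝ) 1)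
    (hroot : fCournot γ β x = 0) (hroot' : fCournot γ' β x' = 0) :
    x < x' := by
  obtain ⟨hx0, hx1⟩ := hx
  obtain ⟨hx'0, hx'1⟩ := hx'
  have ha : 0 < x ^ β := Real.rpow_pos_of_pos hx0 β
  have hb : 0 < (1 - x) ^ β := Real.rpow_pos_of_pos (by linarith) β
  have ha' : 0 < x' ^ β := Real.rpow_pos_of_pos hx'0 β
  have hb' : 0 < (1 - x') ^ β := Real.rpow_pos_of_pos (by linarith) β
  have ha1 : x ^ β < 1 := Real.rpow_lt_one hx0.le hx1 hβ₁
  -- f(γ', x) < 0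
  have h0 : 2 * x ^ β - γ * (1 - x) ^ β - (2 - γ) * x ^ β * (1 - x) ^ β = 0 := hroot
  have h0' : 2 * x' ^ β - γ' * (1 - x') ^ β - (2 - γ') * x' ^ β * (1 - x') ^ β = 0 := hroot'
  have h1 : 2 * x ^ β - γ' * (1 - x) ^ β - (2 - γ') * x ^ β * (1 - x) ^ β < 0 := by
    nlinarith [mul_pos hb (sub_pos.mpr ha1)]
  by_contra hc
  push_neg at hc
  have haa : x' ^ β ≤ x ^ β := Real.rpow_le_rpow hx'0.le hc hβ₁.le
  have hbb : (1 - x) ^ β ≤ (1 - x') ^ β :=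
    Real.rpow_le_rpow (by linarith) (by linarith) hβ₁.le
  have H1 : 2 / (1 - x) ^ β - γ' / x ^ β < 2 - γ' := by
    rw [div_sub_div _ _ hb.ne' ha.ne', div_lt_iff₀ (mul_pos hb ha)]
    nlinarith
  have H2 : 2 / (1 - x') ^ β - γ' / x' ^ β = 2 - γ' := by
    rw [div_sub_div _ _ hb'.ne' ha'.ne', div_eq_iff (mul_pos hb' ha').ne']
    nlinarith
  have H3 : 2 / (1 - x') ^ β ≤ 2 / (1 - x) ^ β :=
    div_le_div_of_nonneg_left (by norm_num) hb hbb
  have H4 : γ' / x ^ β ≤ γ' / x' ^ β :=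
    div_le_div_of_nonneg_left (by linarith) ha' haa
  linarith
end

section
/- For β ∈ (0, 1] and γ ∈ (0, 1), let x_C(γ, β) be the unique root in (0, 1) of f_Cournot(x) = 2x^β − γ(1−x)^β − (2−γ) x^β (1−x)^β, and let x_B(γ, β) be the unique root in (0, 1) of f_Bertrand(x) = (2−γ²) x^β − γ(1−x)^β − (2−γ−γ²) x^β (1−x)^β. Then x_B(γ, β) ≥ x_C(γ, β). -/
/-- The Bertrand collaboration criterion function. -/
noncomputable def fBertrand (γ β x : ℝ) : ℝ :=
  (2 - γ ^ 2) * x ^ β - γ * (1 - x) ^ β - (2 - γ - γ ^ 2) * x ^ β * (1 - x) ^ β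

/-- **The Bertrand threshold dominates the Cournot threshold (Theorem 1, property 2).**
For `β ∈ (0,1]` and `γ ∈ (0,1)`, if `x_C ∈ (0,1)` is the root of `f_Cournot` and
`x_B ∈ (0,1)` is the root of `f_Bertrand`, then `x_B ≥ x_C`. -/
theorem bertrand_threshold_ge_cournot_threshold
    (γ β xC xB : ℝ) (hγ₁ : 0 < γ) (hγ₂ : γ < 1) (hβ₁ : 0 < β) (hβ₂ : β ≤ 1)
    (hxC : xC ∈ Set.Ioo (0 : ℝ) 1) (hxB : xB ∈ Set.Ioo (0 : ℝ) 1)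
    (hrootC : fCournot γ β xC = 0) (hrootB : fBertrand γ β xB = 0) :
    xC ≤ xB := by
  by_contra h
  push_neg at h
  -- so xB < xC
  obtain ⟨hxC0, hxC1⟩ := hxC
  obtain ⟨hxB0, hxB1⟩ := hxB
  set uC := xC ^ β with huC
  set uB := xB ^ β with huB
  set vC := (1 - xC) ^ β with hvC
  set vB := (1 - xB) ^ β with hvB
  have huB0 : 0 < uB := Real.rpow_pos_of_pos hxB0 β
  have huC1 : uC < 1 := Real.rpow_lt_one hxC0.le hxC1 hβ₁
  have huBC : uB < uC := Real.rpow_lt_rpow hxB0.le h hβ₁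
  have hvC0 : 0 < vC := Real.rpow_pos_of_pos (by linarith) β
  have hvB1 : vB < 1 := Real.rpow_lt_one (by linarith) (by linarith) hβ₁
  have hvCB : vC < vB := Real.rpow_lt_rpow (by linarith) (by linarith) hβ₁
  have hC : 2 * uC - γ * vC - (2 - γ) * uC * vC = 0 := hrootC
  have hB : (2 - γ ^ 2) * uB - γ * vB - (2 - γ - γ ^ 2) * uB * vB = 0 := hrootB
  -- rewrite as vC*(γ + (2-γ)uC) = 2uC and vB*(γ + (2-γ-γ²)uB) = (2-γ²)uB
  have hdC : 0 < γ + (2 - γ) * uC := by nlinarith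
  have hdB : 0 < γ + (2 - γ - γ ^ 2) * uB := by nlinarith
  have heC : vC * (γ + (2 - γ) * uC) = 2 * uC := by linarith [hC]
  have heB : vB * (γ + (2 - γ - γ ^ 2) * uB) = (2 - γ ^ 2) * uB := by linarith [hB]
  -- from vC < vB cross-multiply:
  have key : 2 * uC * (γ + (2 - γ - γ ^ 2) * uB) <
      (2 - γ ^ 2) * uB * (γ + (2 - γ) * uC) := by
    calc 2 * uC * (γ + (2 - γ - γ ^ 2) * uB)
        = vC * (γ + (2 - γ) * uC) * (γ + (2 - γ - γ ^ 2) * uB) := by rw [heC]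
      _ < vB * (γ + (2 - γ - γ ^ 2) * uB) * (γ + (2 - γ) * uC) := by
          nlinarith [mul_pos hdC hdB]
      _ = (2 - γ ^ 2) * uB * (γ + (2 - γ) * uC) := by rw [heB]
  -- but algebraically LHS - RHS = 2γ(uC-uB) + γ³uB(1-uC) > 0
  nlinarith [mul_pos (mul_pos hγ₁ (mul_pos hγ₁ hγ₁)) (mul_pos huB0 (sub_pos.mpr huC1)),
    mul_pos hγ₁ (sub_pos.mpr huBC)]
end

section
/- For γ ∈ (0, 1) and β ∈ (0, 1], let x_C(γ, β) be the unique root in (0, 1) of f_Cournot(x, γ, β) = 2x^β − γ(1−x)^β − (2−γ) x^β (1−x)^β. Then x_C(γ, β) is increasing in β: for 0 < β < β' ≤ 1, x_C(γ, β) ≤ x_C(γ, β'). Equivalently, f_Cournot(x_C(γ, β), γ, β') < 0 for β' > β, which follows from the inequality (γ/2)·((2 − (2−γ)(1−x)^{β'})/γ)^{β/β'} + ((2−γ)/2)(1−x)^β < 1 evaluated at x = x_C(γ, β). -/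
set_option maxHeartbeats 1000000 in
/-- **The Cournot threshold is increasing in `β` (Theorem 1, property 3).** For
`γ ∈ (0,1)` and `0 < β < β' ≤ 1`, if `x` is the root in `(0,1)` of `f_Cournot(·, γ, β)`
and `x'` the root of `f_Cournot(·, γ, β')`, then `x ≤ x'`; equivalently
`f_Cournot(x, γ, β') < 0`, which follows from the inequality
`(γ/2)·((2 - (2-γ)(1-x)^{β'})/γ)^{β/β'} + ((2-γ)/2)(1-x)^β < 1` at `x`. -/
theorem cournot_threshold_increasing_in_beta
    (γ β β' x x' : ℝ) (hγ₁ : 0 < γ) (hγ₂ : γ < 1)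
    (hβ : 0 < β) (hββ' : β < β') (hβ' : β' ≤ 1)
    (hx : x ∈ Set.Ioo (0 : ℝ) 1) (hx' : x' ∈ Set.Ioo (0 : ℝ) 1)
    (hroot : fCournot γ β x = 0) (hroot' : fCournot γ β' x' = 0) :
    (γ / 2) * ((2 - (2 - γ) * (1 - x) ^ β') / γ) ^ (β / β') +
        ((2 - γ) / 2) * (1 - x) ^ β < 1 ∧
    fCournot γ β' x < 0 ∧
    x ≤ x' := by
  obtain ⟨hx0, hx1⟩ := hx
  obtain ⟨hx'0, hx'1⟩ := hx'
  have hβ'0 : 0 < β' := hβ.trans hββ'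
  have h1x : (0:ℝ) < 1 - x := by linarith
  have h1x' : (0:ℝ) < 1 - x' := by linarith
  set p : ℝ := β / β' with hp_def
  have hp0 : 0 < p := div_pos hβ hβ'0
  have hp1 : p < 1 := (div_lt_one hβ'0).2 hββ'
  set v : ℝ := (1 - x) ^ β' with hv_def
  have hv0 : 0 < v := Real.rpow_pos_of_pos h1x _
  have hv1 : v < 1 := Real.rpow_lt_one h1x.le (by linarith) hβ'0
  set A : ℝ := (2 - (2 - γ) * v) / γ with hA_def
  have hDv : γ < 2 - (2 - γ) * v := by nlinarith
  have hA1 : 1 < A := (lt_div_iff₀ hγ₁).2 (by linarith)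
  have hvp : v ^ p = (1 - x) ^ β := by
    rw [hv_def, ← Real.rpow_mul h1x.le, hp_def]
    congr 1
    field_simp
  -- Part 1: strict Jensen inequality
  have hconc := (Real.strictConcaveOn_rpow hp0 hp1).2
    (Set.mem_Ici.2 (by linarith : (0:ℝ) ≤ A)) (Set.mem_Ici.2 hv0.le)
    (by intro h; rw [h] at hA1; linarith)
    (by positivity : (0:ℝ) < γ / 2) (by linarith : (0:ℝ) < (2 - γ) / 2)
    (by ring)
  simp only [smul_eq_mul] at hconc
  have hsum : γ / 2 * A + (2 - γ) / 2 * v = 1 := by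
    rw [hA_def]; field_simp; ring
  rw [hsum, Real.one_rpow] at hconc
  have key1 : γ / 2 * A ^ p + (2 - γ) / 2 * v ^ p < 1 := hconc
  rw [hvp] at key1
  -- Part 2
  have hxb : 0 < x ^ β := Real.rpow_pos_of_pos hx0 β
  have hxb' : 0 < x ^ β' := Real.rpow_pos_of_pos hx0 β'
  have hu1 : (1 - x) ^ β < 1 := Real.rpow_lt_one h1x.le (by linarith) hβ
  have hu0 : 0 < (1 - x) ^ β := Real.rpow_pos_of_pos h1x β
  have hre : x ^ β * (2 - (2 - γ) * (1 - x) ^ β) = γ * (1 - x) ^ β := by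
    unfold fCournot at hroot; linear_combination hroot
  have hAp : A ^ p < (1 - x) ^ β / x ^ β := by
    have h2 : (2 - (2 - γ) * (1 - x) ^ β) / γ = (1 - x) ^ β / x ^ β := by
      rw [div_eq_div_iff hγ₁.ne' hxb.ne']; linear_combination hre
    rw [← h2, lt_div_iff₀ hγ₁]; linarith
  have hxbp : (x ^ β') ^ p = x ^ β := by
    rw [← Real.rpow_mul hx0.le, hp_def]
    congr 1
    field_simp
  have hAlt : A < v / x ^ β' := by
    by_contra hcon
    push_neg at hcon
    have h4 : (v / x ^ β') ^ p ≤ A ^ p :=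
      Real.rpow_le_rpow (by positivity) hcon hp0.le
    rw [Real.div_rpow hv0.le hxb'.le, hvp, hxbp] at h4
    linarith
  have h3 : (2 - (2 - γ) * v) * x ^ β' < v * γ := by
    rw [← div_lt_div_iff₀ hγ₁ hxb']; exact hAlt
  have part2 : fCournot γ β' x < 0 := by
    unfold fCournot; nlinarith [h3]
  refine ⟨key1, part2, ?_⟩
  -- Part 3: monotonicity in x
  by_contra hle
  push_neg at hle
  have ht't : x' ^ β' < x ^ β' := Real.rpow_lt_rpow hx'0.le hle hβ'0
  have hww' : v < (1 - x') ^ β' := Real.rpow_lt_rpow h1x.le (by linarith) hβ'0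
  have hw'1 : (1 - x') ^ β' < 1 := Real.rpow_lt_one h1x'.le (by linarith) hβ'0
  have e1 : 0 < (x ^ β' - x' ^ β') * (2 - (2 - γ) * (1 - x') ^ β') :=
    mul_pos (by linarith) (by nlinarith)
  have e2 : 0 < ((1 - x') ^ β' - v) * (γ + (2 - γ) * x ^ β') :=
    mul_pos (by linarith) (by nlinarith)
  unfold fCournot at part2 hroot'
  rw [← hv_def] at part2
  have hid : 2 * x ^ β' - γ * v - (2 - γ) * x ^ β' * v =
      (2 * x' ^ β' - γ * (1 - x') ^ β' - (2 - γ) * x' ^ β' * (1 - x') ^ β') +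
      (x ^ β' - x' ^ β') * (2 - (2 - γ) * (1 - x') ^ β') +
      ((1 - x') ^ β' - v) * (γ + (2 - γ) * x ^ β') := by ring
  linarith [part2, hroot', e1, e2, hid]
end

section
/- Let m ≥ 2, γ ∈ (0, 1), β ∈ (0, 1], and let s be an integer with 1 ≤ s ≤ m − 1. Then for every y with 0 < y ≤ 1: (m + 1 − γ)·(1 − y^β/(1+y)^β) > γ s · (y^β − y^β/(1+y)^β). Consequently, in the data-sharing-treaty game, a singleton firm F with data n_F always strictly gains by joining a coalition S whose total data n_S satisfies n_S ≥ n_F (taking y = n_F/n_S), so in any Nash equilibrium the set of firms that join the treaty is upward-closed in data size. -/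
/-! Write `U = y^β ≤ 1` and `V = (1+y)^β > 1`. Clearing the denominator `V`, the claim becomes
`γ s U (V - 1) < (m + 1 - γ)(V - U)`, and this follows from `U ≤ 1` together with the
coefficient bound `γ s < m + 1 - γ`, i.e. `γ (s + 1) < s + 1 ≤ m + 1`. -/

lemma mul_sub_div_lt_mul_one_sub_div {c d U V : ℝ} (hc : 0 ≤ c) (hcd : c < d) (hU : U ≤ 1)
    (hV : 1 < V) : c * (U - U / V) < d * (1 - U / V) := by
  have hV₀ : 0 < V := one_pos.trans hV
  have hlhs : c * (U - U / V) = c * U * (V - 1) / V := by field_simp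
  have hrhs : d * (1 - U / V) = d * (V - U) / V := by field_simp
  rw [hlhs, hrhs]
  refine div_lt_div_of_pos_right ?_ hV₀
  calc c * U * (V - 1) ≤ c * (V - 1) := by nlinarith [mul_nonneg hc (sub_nonneg.2 hV.le)]
    _ < d * (V - 1) := mul_lt_mul_of_pos_right hcd (sub_pos.2 hV)
    _ ≤ d * (V - U) := by nlinarith

lemma mul_lt_add_one_sub {γ : ℝ} (hγ : γ < 1) {m s : ℕ} (hs : s ≤ m - 1) :
    γ * s < m + 1 - γ := by
  have hsm : (s : ℝ) ≤ m := by exact_mod_cast hs.trans (Nat.sub_le m 1)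
  nlinarith

theorem treaty_joining_inequality_general
    (m : ℕ) (γ β : ℝ)
    (hγ₁ : 0 < γ) (hγ₂ : γ < 1) (hβ₁ : 0 < β)
    (s : ℕ) (hs₂ : s ≤ m - 1) :
    ∀ y : ℝ, 0 < y → y ≤ 1 →
      ((m : ℝ) + 1 - γ) * (1 - y ^ β / (1 + y) ^ β) >
        γ * (s : ℝ) * (y ^ β - y ^ β / (1 + y) ^ β) := by
  intro y hy hy₁
  exact mul_sub_div_lt_mul_one_sub_div (by positivity) (mul_lt_add_one_sub hγ₂ hs₂)
    (Real.rpow_le_one hy.le hy₁ hβ₁.le) (Real.one_lt_rpow (by linarith) hβ₁)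

/-- **Joining a larger coalition is always profitable (Lemma 6).** For `m ≥ 2` firms,
`γ ∈ (0,1)`, `β ∈ (0,1]`, and any integer coalition size `1 ≤ s ≤ m - 1`, for every
`y ∈ (0, 1]` (representing the ratio `n_F/n_S ≤ 1` of the singleton firm's data to the
coalition's data):
`(m + 1 - γ)(1 - y^β/(1+y)^β) > γ s (y^β - y^β/(1+y)^β)`.
Hence in the data-sharing-treaty game a singleton firm always strictly gains by joining
a coalition with at least as much data, so the equilibrium treaty membership is
upward-closed in data size. -/
theorem treaty_joining_inequality
    (m : ℕ) (hm : 2 ≤ m) (γ β : ℝ)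
    (hγ₁ : 0 < γ) (hγ₂ : γ < 1) (hβ₁ : 0 < β) (hβ₂ : β ≤ 1)
    (s : ℕ) (hs₁ : 1 ≤ s) (hs₂ : s ≤ m - 1) :
    ∀ y : ℝ, 0 < y → y ≤ 1 →
      ((m : ℝ) + 1 - γ) * (1 - y ^ β / (1 + y) ^ β) >
        γ * (s : ℝ) * (y ^ β - y ^ β / (1 + y) ^ β) :=
  treaty_joining_inequality_general m γ β hγ₁ hγ₂ hβ₁ s hs₂
end

section
/- Let α ∈ (0, 1), B > 0, and c₁, c₂ > 0. In the two-firm Cournot game where firm i chooses q_i > 0 and earns Π_i(q₁, q₂) = αB q_i/(q₁ + q₂) − c_i q_i (arising from a Cobb–Douglas consumer spending share α on two perfectly substitutable goods), the quantities q*_i = αB c₁ c₂ / (c_i (c₁ + c₂)²) form a Nash equilibrium, with equilibrium profits Π_i = αB c_{−i}²/(c₁ + c₂)² = αB/(1 + c_i/c_{−i})². Consequently, if c₁ < c₂ (the firm with more data), then full data sharing (which equalizes costs) strictly lowers firm 1's profit from αB/(1 + c₁/c₂)² to αB/4, so collaboration is never profitable for the firm with more data. -/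
/-!
Writing `t = q + Q` and `s = qₛ + Q`, the first-order condition `A Q = c s²` turns the profit
gap of a firm into `Π(qₛ) - Π(q) = c (s - t)² / t`, so the stationary quantity is a global best
response. At `qᵢ = A cⱼ / (c₁ + c₂)²` total output is `A / (c₁ + c₂)`, which makes both
first-order conditions hold and gives the profits `A cⱼ² / (c₁ + c₂)²`. Equal costs give `A / 4`,
while `c₁ < c₂` gives `1 + c₁ / c₂ < 2`.
-/

/-- Profit of a firm with unit cost `c` producing `q` against rival output `Q`; here `A = αB`,
so the price is `A / (q + Q)`. -/
noncomputable def cournotProfit (A c q Q : ℝ) : ℝ := A * q / (q + Q) - c * q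

lemma cournotProfit_sub_cournotProfit {A c q qₛ Q : ℝ} (hq : q + Q ≠ 0) (hqₛ : qₛ + Q ≠ 0)
    (hfoc : A * Q = c * (qₛ + Q) ^ 2) :
    cournotProfit A c qₛ Q - cournotProfit A c q Q = c * (qₛ - q) ^ 2 / (q + Q) := by
  unfold cournotProfit
  field_simp
  linear_combination (qₛ - q) * hfoc

lemma cournotProfit_le_of_foc {A c q qₛ Q : ℝ} (hc : 0 ≤ c) (hq : 0 < q + Q)
    (hqₛ : qₛ + Q ≠ 0) (hfoc : A * Q = c * (qₛ + Q) ^ 2) :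
    cournotProfit A c q Q ≤ cournotProfit A c qₛ Q := by
  have hgap := cournotProfit_sub_cournotProfit hq.ne' hqₛ hfoc
  have : 0 ≤ c * (qₛ - q) ^ 2 / (q + Q) := by positivity
  linarith

section Equilibrium

variable {A c d : ℝ}

lemma cournot_equilibrium_total_output (hcd : c + d ≠ 0) :
    A * d / (c + d) ^ 2 + A * c / (c + d) ^ 2 = A / (c + d) := by
  field_simp
  ring

lemma cournot_equilibrium_foc (hcd : c + d ≠ 0) :
    A * (A * c / (c + d) ^ 2) = c * (A * d / (c + d) ^ 2 + A * c / (c + d) ^ 2) ^ 2 := by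
  rw [cournot_equilibrium_total_output hcd]
  field_simp

lemma cournotProfit_equilibrium (hcd : c + d ≠ 0) :
    cournotProfit A c (A * d / (c + d) ^ 2) (A * c / (c + d) ^ 2) = A * d ^ 2 / (c + d) ^ 2 := by
  rw [cournotProfit, cournot_equilibrium_total_output hcd]
  field_simp
  ring

lemma cournotProfit_le_equilibrium (hA : 0 < A) (hc : 0 ≤ c) (hcd : 0 < c + d) {q : ℝ}
    (hq : 0 < q) :
    cournotProfit A c q (A * c / (c + d) ^ 2) ≤
      cournotProfit A c (A * d / (c + d) ^ 2) (A * c / (c + d) ^ 2) := by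
  refine cournotProfit_le_of_foc hc (by positivity) ?_ (cournot_equilibrium_foc hcd.ne')
  rw [cournot_equilibrium_total_output hcd.ne']
  positivity

lemma mul_sq_div_add_sq_eq (hd : d ≠ 0) : A * d ^ 2 / (c + d) ^ 2 = A / (1 + c / d) ^ 2 := by
  field_simp
  ring

lemma div_four_lt_div_one_add_div_sq (hA : 0 < A) (hc : 0 < c) (hcd : c < d) :
    A / 4 < A / (1 + c / d) ^ 2 := by
  have hd : 0 < d := hc.trans hcd
  have hlt : 1 + c / d < 2 := by linarith [(div_lt_one hd).2 hcd]
  apply div_lt_div_of_pos_left hA (by positivity)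
  nlinarith [div_pos hc hd]

end Equilibrium

theorem cobb_douglas_cournot_general
    (α B c₁ c₂ : ℝ) (hα₁ : 0 < α) (hB : 0 < B)
    (hc₁ : 0 < c₁) (hc₂ : 0 < c₂)
    (q₁s q₂s : ℝ)
    (hq₁ : q₁s = α * B * c₁ * c₂ / (c₁ * (c₁ + c₂) ^ 2))
    (hq₂ : q₂s = α * B * c₁ * c₂ / (c₂ * (c₁ + c₂) ^ 2)) :
    (∀ q : ℝ, 0 < q →
      α * B * q / (q + q₂s) - c₁ * q ≤ α * B * q₁s / (q₁s + q₂s) - c₁ * q₁s) ∧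
    (∀ q : ℝ, 0 < q →
      α * B * q / (q₁s + q) - c₂ * q ≤ α * B * q₂s / (q₁s + q₂s) - c₂ * q₂s) ∧
    α * B * q₁s / (q₁s + q₂s) - c₁ * q₁s = α * B * c₂ ^ 2 / (c₁ + c₂) ^ 2 ∧
    α * B * q₂s / (q₁s + q₂s) - c₂ * q₂s = α * B * c₁ ^ 2 / (c₁ + c₂) ^ 2 ∧
    α * B * c₂ ^ 2 / (c₁ + c₂) ^ 2 = α * B / (1 + c₁ / c₂) ^ 2 ∧
    α * B * c₁ ^ 2 / (c₁ + c₂) ^ 2 = α * B / (1 + c₂ / c₁) ^ 2 ∧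
    (c₁ < c₂ → α * B / 4 < α * B / (1 + c₁ / c₂) ^ 2) := by
  have hA : 0 < α * B := mul_pos hα₁ hB
  have h₁₂ : 0 < c₁ + c₂ := add_pos hc₁ hc₂
  have h₂₁ : 0 < c₂ + c₁ := add_pos hc₂ hc₁
  obtain rfl : q₁s = α * B * c₂ / (c₁ + c₂) ^ 2 := by rw [hq₁]; field_simp
  obtain rfl : q₂s = α * B * c₁ / (c₂ + c₁) ^ 2 := by rw [hq₂, add_comm c₁]; field_simp
  have firm₂_le (q : ℝ) (hq : 0 < q) := cournotProfit_le_equilibrium hA hc₂.le h₂₁ hq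
  have firm₂_profit := cournotProfit_equilibrium (A := α * B) h₂₁.ne'
  unfold cournotProfit at firm₂_le firm₂_profit
  rw [add_comm c₂ c₁] at firm₂_le firm₂_profit ⊢
  refine ⟨fun q hq => cournotProfit_le_equilibrium hA hc₁.le h₁₂ hq, fun q hq => ?_,
    cournotProfit_equilibrium h₁₂.ne', ?_, mul_sq_div_add_sq_eq hc₂.ne', ?_,
    div_four_lt_div_one_add_div_sq hA hc₁⟩
  · rw [add_comm (α * B * c₂ / _) q, add_comm (α * B * c₂ / _)]
    exact firm₂_le q hq
  · rwa [add_comm (α * B * c₂ / _)]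
  · rw [add_comm c₁ c₂]
    exact mul_sq_div_add_sq_eq hc₁.ne'

/-- **Cournot competition with multiplicative substitution (Cobb–Douglas demand).** For
`α ∈ (0,1)`, `B > 0`, and costs `c₁, c₂ > 0`, in the game with profits
`Π_i(q₁, q₂) = αB q_i/(q₁+q₂) - c_i q_i`, the quantities
`q*_i = αB c₁ c₂/(c_i (c₁+c₂)²)` form a Nash equilibrium (each firm chooses `q_i > 0`),
with equilibrium profits `Π_i = αB c_{-i}²/(c₁+c₂)² = αB/(1 + c_i/c_{-i})²`.
Consequently, if `c₁ < c₂`, full data sharing (equalizing costs) strictly lowers firm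
1's profit from `αB/(1 + c₁/c₂)²` to `αB/4`. -/
theorem cobb_douglas_cournot
    (α B c₁ c₂ : ℝ) (hα₁ : 0 < α) (hα₂ : α < 1) (hB : 0 < B)
    (hc₁ : 0 < c₁) (hc₂ : 0 < c₂)
    (q₁s q₂s : ℝ)
    (hq₁ : q₁s = α * B * c₁ * c₂ / (c₁ * (c₁ + c₂) ^ 2))
    (hq₂ : q₂s = α * B * c₁ * c₂ / (c₂ * (c₁ + c₂) ^ 2)) :
    (∀ q : ℝ, 0 < q →
      α * B * q / (q + q₂s) - c₁ * q ≤ α * B * q₁s / (q₁s + q₂s) - c₁ * q₁s) ∧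
    (∀ q : ℝ, 0 < q →
      α * B * q / (q₁s + q) - c₂ * q ≤ α * B * q₂s / (q₁s + q₂s) - c₂ * q₂s) ∧
    α * B * q₁s / (q₁s + q₂s) - c₁ * q₁s = α * B * c₂ ^ 2 / (c₁ + c₂) ^ 2 ∧
    α * B * q₂s / (q₁s + q₂s) - c₂ * q₂s = α * B * c₁ ^ 2 / (c₁ + c₂) ^ 2 ∧
    α * B * c₂ ^ 2 / (c₁ + c₂) ^ 2 = α * B / (1 + c₁ / c₂) ^ 2 ∧
    α * B * c₁ ^ 2 / (c₁ + c₂) ^ 2 = α * B / (1 + c₂ / c₁) ^ 2 ∧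
    (c₁ < c₂ → α * B / 4 < α * B / (1 + c₁ / c₂) ^ 2) :=
  cobb_douglas_cournot_general α B c₁ c₂ hα₁ hB hc₁ hc₂ q₁s q₂s hq₁ hq₂
end
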